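/- arXiv:2202.02674 — 2 statements merged into one kernel-verified Lean document; each statement's English description precedes it below -/
import Mathlib

section
/- Suppose ℍ satisfies the minimum value property, and suppose that either R₁ = R, or R has a unit 1 and R = {λ·1 : λ ∈ ℂ} ∪ R₁. Then a closed subspace V of ℍ is an R-submodule of ℍ (i.e., r•h ∈ V for all r ∈ R and h ∈ V) if and only if the valuation homogeneous decomposition of V is R₁ inner and has the full projection property. -/
noncomputable section

/-- The valuation subspace series: `V_k = {h ∈ V : ord h ≥ k}`. -/
def valSub {H : Type*} (ord : H → ℕ∞) (V : Set H) (k : ℕ) : Set H :=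
  {h | h ∈ V ∧ (k : ℕ∞) ≤ ord h}

/-- The valuation homogeneous components: `W_k`, the orthogonal complement of
`V_{k+1}` inside `V_k`. -/
def valHom {H : Type*} [NormedAddCommGroup H] [InnerProductSpace ℂ H]
    (ord : H → ℕ∞) (V : Set H) (k : ℕ) : Set H :=
  {h | h ∈ valSub ord V k ∧ ∀ g ∈ valSub ord V (k + 1), (inner ℂ g h : ℂ) = 0}

/-- `V` is `R₁` invariant: `r • h ∈ V` for all `r` with `ord_R r ≥ 1` and `h ∈ V`. -/
def R1Invariant {R H : Type*} [SMul R H] (ordR : R → ℕ∞) (V : Set H) : Prop :=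
  ∀ r : R, 1 ≤ ordR r → ∀ h ∈ V, r • h ∈ V

/-- The valuation homogeneous decomposition of `V` is `R₁` inner. -/
def R1InnerDecomp {R H : Type*} [NormedAddCommGroup H] [InnerProductSpace ℂ H] [SMul R H]
    (ordR : R → ℕ∞) (ord : H → ℕ∞) (V : Set H) : Prop :=
  ∀ (k m : ℕ) (r : R), 1 ≤ ordR r → ∀ h ∈ valHom ord V k, ∀ g ∈ V,
    (m : ℕ∞) < ord (r • h - g) → ∀ w ∈ valHom ord V m, (inner ℂ w (r • h - g) : ℂ) = 0

/-- The valuation homogeneous decomposition of `V` has the full projection property,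
where `P m` is the orthogonal projection of `ℍ` onto `H_m`. -/
def FullProjProp {R H : Type*} [NormedAddCommGroup H] [InnerProductSpace ℂ H] [SMul R H]
    (ordR : R → ℕ∞) (ord : H → ℕ∞) (P : ℕ → H → H) (V : Set H) : Prop :=
  ∀ (k m : ℕ) (r : R), 1 ≤ ordR r → ∀ h ∈ valHom ord V k, ∀ g ∈ V,
    (m : ℕ∞) ≤ ord (r • h - g) → P m (r • h - g) ∈ P m '' valHom ord V m

/-- `P` is the orthogonal projection onto the (sub)space `S`:
`P h ∈ S` and `h - P h ⟂ S` for every `h`. -/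
def IsOrthProjOnto {H : Type*} [NormedAddCommGroup H] [InnerProductSpace ℂ H]
    (S : Set H) (P : H → H) : Prop :=
  ∀ h : H, P h ∈ S ∧ ∀ y ∈ S, (inner ℂ y (h - P h) : ℂ) = 0

/-- The minimum value property: for every nonzero `h`, `ord h` is the least `k`
with `P k h ≠ 0`, where `P k` is the orthogonal projection of `ℍ` onto `H_k`. -/
def MinValProp {H : Type*} [Zero H] (ord : H → ℕ∞) (P : ℕ → H → H) : Prop :=
  ∀ h : H, h ≠ 0 → ∃ k : ℕ, P k h ≠ 0 ∧ (∀ j < k, P j h = 0) ∧ ord h = (k : ℕ∞)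

/-!
If `V` is an `R`-submodule, every `r • h - g` (with `h ∈ W_k`, `g ∈ V`) lies in `V`, so both
properties follow from the splitting `V_m = W_m ⊕ V_{m+1}`: an element of `V_{m+1}` is orthogonal
to `W_m`, and modulo `ℍ_{m+1}` an element of `V_m` agrees with its `W_m`-component.

Conversely, fix `h ∈ W_k` and `r ∈ R₁`. The full projection property and the minimum value
property produce `g_n ∈ V` with `ord (r • h - g_n) ≥ n` and `g_{n+1} - g_n ∈ W_n`. The inner
property makes every `g_n - g_m` (`m ≤ n`) orthogonal to `r • h - g_n`, so by Pythagoras `(g_n)`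
is Cauchy; by upper semicontinuity its limit `z` has `ord (r • h - z) = ∞`, i.e. `r • h = z ∈ V`.
Finally the `W_k` span a dense subspace of `V`, since a vector of `V` orthogonal to all of them
has infinite order, and `r •` is continuous, so `r • V ⊆ V`.
-/

open Filter Topology
open scoped InnerProductSpace

theorem isClosed_setOf_le_of_limsup_le {X : Type*} [TopologicalSpace X] [SequentialSpace X]
    {f : X → ℕ∞} (hf : ∀ (u : ℕ → X) (x : X), Tendsto u atTop (𝓝 x) →
      limsup (fun j => f (u j)) atTop ≤ f x) (c : ℕ∞) :
    IsClosed {x | c ≤ f x} :=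
  IsSeqClosed.isClosed fun u x hu hux =>
    (le_limsup_of_frequently_le (Frequently.of_forall hu)).trans (hf u x hux)

theorem cauchySeq_of_inner_sub_eq_zero {𝕜 E : Type*} [RCLike 𝕜] [NormedAddCommGroup E]
    [InnerProductSpace 𝕜 E] {x : E} {g : ℕ → E}
    (h : ∀ m n, m ≤ n → ⟪g n - g m, x - g n⟫_𝕜 = 0) : CauchySeq g := by
  set a : ℕ → ℝ := fun n => ‖x - g n‖ ^ 2
  have hpyth : ∀ m n, m ≤ n → a m = ‖g n - g m‖ ^ 2 + a n := fun m n hmn => by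
    have := norm_add_sq_eq_norm_sq_add_norm_sq_of_inner_eq_zero _ _ (h m n hmn)
    rw [add_comm, sub_add_sub_cancel] at this
    simp only [a, sq]
    linarith
  have hanti : Antitone a := fun m n hmn => by
    linarith [hpyth m n hmn, sq_nonneg ‖g n - g m‖]
  have ha : CauchySeq a :=
    (tendsto_atTop_ciInf hanti ⟨0, by rintro _ ⟨n, rfl⟩; positivity⟩).cauchySeq
  rw [Metric.cauchySeq_iff'] at ha ⊢
  intro ε hε
  obtain ⟨N, hN⟩ := ha (ε ^ 2) (by positivity)
  refine ⟨N, fun n hn => ?_⟩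
  have hsq : dist (g n) (g N) ^ 2 < ε ^ 2 := by
    have := hN n hn
    rw [Real.dist_eq] at this
    rw [dist_eq_norm]
    linarith [hpyth N n hn, neg_abs_le (a n - a N)]
  exact (pow_lt_pow_iff_left₀ dist_nonneg hε.le two_ne_zero).1 hsq

namespace IsOrthProjOnto

variable {H : Type*} [NormedAddCommGroup H] [InnerProductSpace ℂ H] {S : Set H} {P : H → H}

theorem eq_of_inner_sub_eq_zero (hP : IsOrthProjOnto S P) (hS : ∀ a ∈ S, ∀ b ∈ S, a - b ∈ S)
    {x p : H} (hp : p ∈ S) (h : ∀ y ∈ S, ⟪y, x - p⟫_ℂ = 0) : P x = p := by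
  have hd := hS _ (hP x).1 _ hp
  have : ⟪P x - p, (x - p) - (x - P x)⟫_ℂ = 0 := by
    rw [inner_sub_right, h _ hd, (hP x).2 _ hd, sub_zero]
  rw [sub_sub_sub_cancel_left] at this
  exact sub_eq_zero.1 (inner_self_eq_zero.1 this)

theorem apply_eq_apply (hP : IsOrthProjOnto S P) (hS : ∀ a ∈ S, ∀ b ∈ S, a - b ∈ S)
    {x w : H} (h : ∀ y ∈ S, ⟪y, x - w⟫_ℂ = 0) : P x = P w :=
  hP.eq_of_inner_sub_eq_zero hS (hP w).1 fun y hy => by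
    rw [← sub_add_sub_cancel x w (P w), inner_add_right, h y hy, (hP w).2 y hy, add_zero]

theorem apply_sub_eq_zero (hP : IsOrthProjOnto S P) (hS : ∀ a ∈ S, ∀ b ∈ S, a - b ∈ S)
    {x w : H} (h : P x = P w) : P (x - w) = 0 := by
  refine hP.eq_of_inner_sub_eq_zero hS (sub_self (P x) ▸ hS _ (hP x).1 _ (hP x).1) fun y hy => ?_
  have hxw : x - w - 0 = (x - P x) - (w - P w) := by rw [h]; abel
  rw [hxw, inner_sub_right, (hP x).2 y hy, (hP w).2 y hy, sub_zero]

end IsOrthProjOnto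

theorem MinValProp.succ_le_of_apply_eq_zero {X : Type*} [Zero X] {ord : X → ℕ∞}
    {P : ℕ → X → X} (hmin : MinValProp ord P) (hord : ord 0 = ⊤) {m : ℕ} {x : X}
    (hle : (m : ℕ∞) ≤ ord x) (hx : P m x = 0) : ((m + 1 : ℕ) : ℕ∞) ≤ ord x := by
  obtain rfl | hx0 := eq_or_ne x 0
  · simp [hord]
  obtain ⟨k, hk, -, hkx⟩ := hmin x hx0
  rw [hkx, Nat.cast_le] at hle ⊢
  exact lt_of_le_of_ne hle fun hmk => hk (hmk ▸ hx)

section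

variable {H : Type*} [NormedAddCommGroup H] [InnerProductSpace ℂ H]

theorem inner_eq_zero_of_mem_valHom {ord : H → ℕ∞} {V : Set H} {m : ℕ} {w x : H}
    (hw : w ∈ valHom ord V m) (hx : x ∈ V) (hlt : (m : ℕ∞) < ord x) : ⟪w, x⟫_ℂ = 0 :=
  inner_eq_zero_symm.1 (hw.2 x ⟨hx, by exact_mod_cast Order.add_one_le_of_lt hlt⟩)

structure IsHilbertValuation (ord : H → ℕ∞) : Prop where
  eq_top_iff : ∀ h : H, ord h = ⊤ ↔ h = 0
  smul_eq : ∀ (c : ℂ) (h : H), c ≠ 0 → ord (c • h) = ord h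
  min_le_add : ∀ h₁ h₂ : H, min (ord h₁) (ord h₂) ≤ ord (h₁ + h₂)

namespace IsHilbertValuation

variable {ord : H → ℕ∞}

theorem ord_zero (hv : IsHilbertValuation ord) : ord 0 = ⊤ :=
  (hv.eq_top_iff 0).2 rfl

theorem eq_zero_of_forall_le (hv : IsHilbertValuation ord) {h : H}
    (hh : ∀ n : ℕ, (n : ℕ∞) ≤ ord h) : h = 0 :=
  (hv.eq_top_iff h).1 (ENat.eq_top_iff_forall_ge.2 hh)

theorem min_le_sub (hv : IsHilbertValuation ord) (h₁ h₂ : H) :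
    min (ord h₁) (ord h₂) ≤ ord (h₁ - h₂) := by
  have hneg : ord (-h₂) = ord h₂ := by simpa using hv.smul_eq (-1) h₂ (by norm_num)
  simpa [sub_eq_add_neg, hneg] using hv.min_le_add h₁ (-h₂)

/-- `ℍ_n`; `V ⊓ hv.geSubmodule n` is `valSub ord V n` by definition. -/
def geSubmodule (hv : IsHilbertValuation ord) (n : ℕ) : Submodule ℂ H where
  carrier := {h | (n : ℕ∞) ≤ ord h}
  add_mem' ha hb := (le_min ha hb).trans (hv.min_le_add _ _)
  zero_mem' := by simp [hv.ord_zero]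
  smul_mem' c h hh := by
    obtain rfl | hc := eq_or_ne c 0
    · simp [hv.ord_zero]
    · simpa [hv.smul_eq c h hc] using hh

theorem sub_mem_valHom_univ (hv : IsHilbertValuation ord) (m : ℕ) :
    ∀ a ∈ valHom ord Set.univ m, ∀ b ∈ valHom ord Set.univ m, a - b ∈ valHom ord Set.univ m :=
  fun a ha b hb => ⟨⟨trivial, (le_min ha.1.2 hb.1.2).trans (hv.min_le_sub a b)⟩,
    fun g hg => by rw [inner_sub_right, ha.2 g hg, hb.2 g hg, sub_zero]⟩

theorem exists_mem_valHom_succ_le_sub (hv : IsHilbertValuation ord) {P : ℕ → H → H}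
    (hP : ∀ m : ℕ, IsOrthProjOnto (valHom ord Set.univ m) (P m)) (hmin : MinValProp ord P)
    {V : Set H} {n : ℕ} {y : H} (hy : (n : ℕ∞) ≤ ord y) (hproj : P n y ∈ P n '' valHom ord V n) :
    ∃ w ∈ valHom ord V n, ((n + 1 : ℕ) : ℕ∞) ≤ ord (y - w) := by
  obtain ⟨w, hw, hPw⟩ := hproj
  exact ⟨w, hw, hmin.succ_le_of_apply_eq_zero hv.ord_zero
    ((le_min hy hw.1.2).trans (hv.min_le_sub y w))
    ((hP n).apply_sub_eq_zero (hv.sub_mem_valHom_univ n) hPw.symm)⟩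

theorem exists_approx_seq (hv : IsHilbertValuation ord) {P : ℕ → H → H}
    (hP : ∀ m : ℕ, IsOrthProjOnto (valHom ord Set.univ m) (P m)) (hmin : MinValProp ord P)
    {V : Submodule ℂ H} {x : H}
    (hproj : ∀ g ∈ V, ∀ m : ℕ, (m : ℕ∞) ≤ ord (x - g) → P m (x - g) ∈ P m '' valHom ord V m) :
    ∃ g : ℕ → H, ∀ n, g n ∈ V ∧ (n : ℕ∞) ≤ ord (x - g n) ∧ g (n + 1) - g n ∈ valHom ord V n := by
  have step : ∀ n : ℕ, ∀ g ∈ V, (n : ℕ∞) ≤ ord (x - g) →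
      ∃ w ∈ valHom ord V n, ((n + 1 : ℕ) : ℕ∞) ≤ ord (x - (g + w)) := fun n g hg hn => by
    simpa only [sub_add_eq_sub_sub] using
      hv.exists_mem_valHom_succ_le_sub hP hmin hn (hproj g hg n hn)
  choose! w hwV hword using step
  let g : ℕ → H := fun n => Nat.rec 0 (fun k gk => gk + w k gk) n
  have hg : ∀ n, g n ∈ V ∧ (n : ℕ∞) ≤ ord (x - g n) := by
    intro n
    induction n with
    | zero => exact ⟨V.zero_mem, by simp⟩
    | succ n ih => exact ⟨V.add_mem ih.1 (hwV n _ ih.1 ih.2).1.1, hword n _ ih.1 ih.2⟩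
  refine ⟨g, fun n => ⟨(hg n).1, (hg n).2, ?_⟩⟩
  change g n + w n (g n) - g n ∈ _
  rw [add_sub_cancel_left]
  exact hwV n _ (hg n).1 (hg n).2

variable [CompleteSpace H]

theorem exists_eq_add_of_mem_valSub (hv : IsHilbertValuation ord)
    (hclosed : ∀ n : ℕ, IsClosed {h : H | (n : ℕ∞) ≤ ord h}) {V : Submodule ℂ H}
    (hV : IsClosed (V : Set H)) {n : ℕ} {u : H} (hu : u ∈ valSub ord V n) :
    ∃ w ∈ valHom ord V n, ∃ t ∈ valSub ord V (n + 1), u = w + t := by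
  set K := V ⊓ hv.geSubmodule (n + 1)
  have : CompleteSpace K := (hV.inter (hclosed (n + 1))).completeSpace_coe
  have ht : K.starProjection u ∈ valSub ord V (n + 1) := K.starProjection_apply_mem u
  refine ⟨u - K.starProjection u, ⟨⟨V.sub_mem hu.1 ht.1, ?_⟩, fun g hg => ?_⟩,
    _, ht, (sub_add_cancel _ _).symm⟩
  · exact (le_min hu.2 ((Nat.cast_le.2 n.le_succ).trans ht.2)).trans (hv.min_le_sub _ _)
  · exact (K.mem_orthogonal _).1 (K.sub_starProjection_mem_orthogonal u) g hg

theorem apply_mem_image_valHom (hv : IsHilbertValuation ord)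
    (hclosed : ∀ n : ℕ, IsClosed {h : H | (n : ℕ∞) ≤ ord h}) {P : ℕ → H → H}
    (hP : ∀ m : ℕ, IsOrthProjOnto (valHom ord Set.univ m) (P m)) {V : Submodule ℂ H}
    (hV : IsClosed (V : Set H)) {m : ℕ} {x : H} (hx : x ∈ valSub ord V m) :
    P m x ∈ P m '' valHom ord V m := by
  obtain ⟨w, hw, t, ht, rfl⟩ := hv.exists_eq_add_of_mem_valSub hclosed hV hx
  refine ⟨w, hw, ((hP m).apply_eq_apply (hv.sub_mem_valHom_univ m) fun y hy => ?_).symm⟩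
  rw [add_sub_cancel_left]
  exact inner_eq_zero_symm.1 (hy.2 t ⟨trivial, ht.2⟩)

theorem mem_of_forall_approx (hv : IsHilbertValuation ord)
    (hclosed : ∀ n : ℕ, IsClosed {h : H | (n : ℕ∞) ≤ ord h}) {P : ℕ → H → H}
    (hP : ∀ m : ℕ, IsOrthProjOnto (valHom ord Set.univ m) (P m)) (hmin : MinValProp ord P)
    {V : Submodule ℂ H} (hV : IsClosed (V : Set H)) {x : H}
    (hinner : ∀ g ∈ V, ∀ m : ℕ, (m : ℕ∞) < ord (x - g) →
      ∀ w ∈ valHom ord V m, ⟪w, x - g⟫_ℂ = 0)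
    (hproj : ∀ g ∈ V, ∀ m : ℕ, (m : ℕ∞) ≤ ord (x - g) → P m (x - g) ∈ P m '' valHom ord V m) :
    x ∈ V := by
  obtain ⟨g, hg⟩ := hv.exists_approx_seq hP hmin hproj
  -- `g n - g m` telescopes into increments from `W_i` with `i < n ≤ ord (x - g n)`.
  have horth : ∀ m n, m ≤ n → ⟪g n - g m, x - g n⟫_ℂ = 0 := fun m n hmn => by
    rw [← Finset.sum_Ico_sub g hmn, sum_inner]
    refine Finset.sum_eq_zero fun i hi => hinner _ (hg n).1 i ?_ _ (hg i).2.2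
    exact (Nat.cast_lt.2 (Finset.mem_Ico.1 hi).2).trans_le (hg n).2.1
  obtain ⟨z, hz⟩ := cauchySeq_tendsto_of_complete (cauchySeq_of_inner_sub_eq_zero horth)
  have hxz : x = z := sub_eq_zero.1 <| hv.eq_zero_of_forall_le fun N =>
    (hclosed N).mem_of_tendsto (tendsto_const_nhds.sub hz)
      (eventually_atTop.2 ⟨N, fun n hn => (Nat.cast_le.2 hn).trans (hg n).2.1⟩)
  exact hxz ▸ hV.mem_of_tendsto hz (Eventually.of_forall fun n => (hg n).1)

theorem eq_zero_of_forall_inner_valHom_eq_zero (hv : IsHilbertValuation ord)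
    (hclosed : ∀ n : ℕ, IsClosed {h : H | (n : ℕ∞) ≤ ord h}) {V : Submodule ℂ H}
    (hV : IsClosed (V : Set H)) {d : H} (hd : d ∈ V)
    (horth : ∀ k, ∀ w ∈ valHom ord V k, ⟪w, d⟫_ℂ = 0) : d = 0 := by
  refine hv.eq_zero_of_forall_le fun n => ?_
  induction n with
  | zero => simp
  | succ n ih =>
    obtain ⟨w, hw, t, ht, hwt⟩ := hv.exists_eq_add_of_mem_valSub hclosed hV ⟨hd, ih⟩
    have hw0 : w = 0 := by
      have : ⟪w, d - t⟫_ℂ = 0 := by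
        rw [inner_sub_right, horth n w hw, inner_eq_zero_symm.1 (hw.2 t ht), sub_zero]
      rwa [hwt, add_sub_cancel_right, inner_self_eq_zero] at this
    rw [hwt, hw0, zero_add]
    exact ht.2

theorem le_topologicalClosure_span_valHom (hv : IsHilbertValuation ord)
    (hclosed : ∀ n : ℕ, IsClosed {h : H | (n : ℕ∞) ≤ ord h}) {V : Submodule ℂ H}
    (hV : IsClosed (V : Set H)) :
    V ≤ (Submodule.span ℂ (⋃ k, valHom ord (V : Set H) k)).topologicalClosure := by
  set K := Submodule.span ℂ (⋃ k, valHom ord (V : Set H) k)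
  set S := K.topologicalClosure
  have hSV : S ≤ V := Submodule.topologicalClosure_minimal _
    (Submodule.span_le.2 (Set.iUnion_subset fun k w hw => hw.1.1)) hV
  have : CompleteSpace S := (Submodule.isClosed_topologicalClosure _).completeSpace_coe
  intro u hu
  have hd := hv.eq_zero_of_forall_inner_valHom_eq_zero hclosed hV
    (V.sub_mem hu (hSV (S.starProjection_apply_mem u))) fun k w hw =>
      (S.mem_orthogonal _).1 (S.sub_starProjection_mem_orthogonal u) w
        (K.le_topologicalClosure (Submodule.subset_span (Set.mem_iUnion_of_mem k hw)))
  rw [← S.starProjection_eq_self_iff]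
  exact (sub_eq_zero.1 hd).symm

theorem mapsTo_of_mapsTo_valHom (hv : IsHilbertValuation ord)
    (hclosed : ∀ n : ℕ, IsClosed {h : H | (n : ℕ∞) ≤ ord h}) {V : Submodule ℂ H}
    (hV : IsClosed (V : Set H)) (f : H →ₗ[ℂ] H) (hf : Continuous f)
    (hW : ∀ k, Set.MapsTo f (valHom ord V k) V) : Set.MapsTo f V V := by
  have hclosure : (Submodule.span ℂ (⋃ k, valHom ord (V : Set H) k)).topologicalClosure ≤
      V.comap f :=
    Submodule.topologicalClosure_minimal _ (Submodule.span_le.2 (Set.iUnion_subset hW))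
      (hV.preimage hf)
  exact fun u hu => hclosure (hv.le_topologicalClosure_span_valHom hclosed hV hu)

end IsHilbertValuation

end

theorem abstract_beurling_submodule_general
    {R H : Type*} [CommRing R] [Algebra ℂ R]
    [NormedAddCommGroup H] [InnerProductSpace ℂ H] [CompleteSpace H]
    [Module R H] [SMulCommClass ℂ R H] [IsScalarTower ℂ R H]
    (ordR : R → ℕ∞) (ord : H → ℕ∞)
    (hordtop : ∀ h : H, ord h = ⊤ ↔ h = 0)
    (hordc : ∀ (c : ℂ) (h : H), c ≠ 0 → ord (c • h) = ord h)
    (hordadd : ∀ h₁ h₂ : H, min (ord h₁) (ord h₂) ≤ ord (h₁ + h₂))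
    (hordusc : ∀ (u : ℕ → H) (h : H), Filter.Tendsto u Filter.atTop (nhds h) →
      Filter.limsup (fun j => ord (u j)) Filter.atTop ≤ ord h)
    (hsmulcont : ∀ r : R, Continuous fun h : H => r • h)
    (P : ℕ → H → H)
    (hP : ∀ m : ℕ, IsOrthProjOnto (valHom ord (Set.univ : Set H) m) (P m))
    (hmin : MinValProp ord P)
    (hR : (∀ r : R, 1 ≤ ordR r) ∨ (∀ r : R, (∃ c : ℂ, r = c • (1 : R)) ∨ 1 ≤ ordR r))
    (V : Submodule ℂ H) (hVc : IsClosed (V : Set H)) :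
    (∀ (r : R), ∀ h ∈ V, r • h ∈ (V : Set H)) ↔
      R1InnerDecomp ordR ord (V : Set H) ∧ FullProjProp ordR ord P (V : Set H) := by
  have hv : IsHilbertValuation ord := ⟨hordtop, hordc, hordadd⟩
  have hclosed (n : ℕ) := isClosed_setOf_le_of_limsup_le hordusc (n : ℕ∞)
  constructor
  · intro hsub
    exact ⟨fun k m r _ h hh g hg hlt w hw =>
        inner_eq_zero_of_mem_valHom hw (V.sub_mem (hsub r h hh.1.1) hg) hlt,
      fun k m r _ h hh g hg hle =>
        hv.apply_mem_image_valHom hclosed hP hVc ⟨V.sub_mem (hsub r h hh.1.1) hg, hle⟩⟩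
  · rintro ⟨hinner, hproj⟩
    have hR₁ (r : R) (hr : 1 ≤ ordR r) : Set.MapsTo (DistribSMul.toLinearMap ℂ H r) V V :=
      hv.mapsTo_of_mapsTo_valHom hclosed hVc (DistribSMul.toLinearMap ℂ H r) (hsmulcont r)
        fun k w hw => hv.mem_of_forall_approx hclosed hP hmin hVc
          (fun g hg m => hinner k m r hr w hw g hg) (fun g hg m => hproj k m r hr w hw g hg)
    intro r h hh
    rcases hR with hR | hR
    · exact hR₁ r (hR r) hh
    · obtain ⟨c, rfl⟩ | hr := hR r
      · rw [smul_assoc, one_smul]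
        exact V.smul_mem c hh
      · exact hR₁ r hr hh

/-- Suppose `ℍ` satisfies the minimum value property, and suppose that either `R₁ = R`,
or `R` has a unit and `R = {λ·1 : λ ∈ ℂ} ∪ R₁`.  Then a closed subspace `V` of `ℍ` is an
`R`-submodule of `ℍ` if and only if the valuation homogeneous decomposition of `V` is
`R₁` inner and has the full projection property. -/
theorem abstract_beurling_submodule
    {R H : Type*} [CommRing R] [Algebra ℂ R]
    [NormedAddCommGroup H] [InnerProductSpace ℂ H] [CompleteSpace H]
    [Module R H] [SMulCommClass ℂ R H] [IsScalarTower ℂ R H]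
    (ordR : R → ℕ∞) (ord : H → ℕ∞)
    (hordRunit : ∀ r : R, IsUnit r → ordR r = 0)
    (hordRtop : ∀ r : R, ordR r = ⊤ ↔ r = 0)
    (hordRmul : ∀ r s : R, ordR r + ordR s ≤ ordR (r * s))
    (hordRsmul : ∀ (c : ℂ) (r : R), c ≠ 0 → ordR (c • r) = ordR r)
    (hordRadd : ∀ r s : R, min (ordR r) (ordR s) ≤ ordR (r + s))
    (hordtop : ∀ h : H, ord h = ⊤ ↔ h = 0)
    (hordsmul : ∀ (r : R) (h : H), ordR r + ord h ≤ ord (r • h))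
    (hordc : ∀ (c : ℂ) (h : H), c ≠ 0 → ord (c • h) = ord h)
    (hordadd : ∀ h₁ h₂ : H, min (ord h₁) (ord h₂) ≤ ord (h₁ + h₂))
    (hordusc : ∀ (u : ℕ → H) (h : H), Filter.Tendsto u Filter.atTop (nhds h) →
      Filter.limsup (fun j => ord (u j)) Filter.atTop ≤ ord h)
    (hsmulcont : ∀ r : R, Continuous fun h : H => r • h)
    (P : ℕ → H → H)
    (hP : ∀ m : ℕ, IsOrthProjOnto (valHom ord (Set.univ : Set H) m) (P m))
    (hmin : MinValProp ord P)
    (hR : (∀ r : R, 1 ≤ ordR r) ∨ (∀ r : R, (∃ c : ℂ, r = c • (1 : R)) ∨ 1 ≤ ordR r))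
    (V : Submodule ℂ H) (hVc : IsClosed (V : Set H)) :
    (∀ (r : R), ∀ h ∈ V, r • h ∈ (V : Set H)) ↔
      R1InnerDecomp ordR ord (V : Set H) ∧ FullProjProp ordR ord P (V : Set H) :=
  abstract_beurling_submodule_general ordR ord hordtop hordc hordadd hordusc hsmulcont P hP hmin hR
    V hVc
end
end

section
/- Suppose in addition that R = ℂ[X] is the polynomial algebra in one variable with ord_R(p) equal to the multiplicity of 0 as a root of p (and ord_R(0) = ∞), that ℍ satisfies the minimum value property, and that ℍ is singly generated, i.e., dim_ℂ H_m ≤ 1 for every m ∈ ℕ. Let V be a nonzero closed R₁ invariant subspace of ℍ, let k be the least index with W_k ≠ {0}, and suppose V = V_k. Let M be the orthogonal complement in V of the closure of X•V = {X•h : h ∈ V}. If dim_ℂ M ≥ 2, then the closure of X•V is a proper subspace of V_{k+1}. -/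
noncomputable section

open Filter Topology
open scoped InnerProductSpace

/-!
Every element of `closure (X • V)` lies in `V_{k+1}`, since `ord_R X = 1` and `V = V_k`, and
`V_{k+1}` is closed by upper semicontinuity of `ord`. If the two were equal, the orthogonal
complement `M` of `closure (X • V)` in `V` would be the homogeneous component `W_k` of `V`. Its
nonzero elements have valuation exactly `k`, so by the minimum value property `P_k` is injective
on `W_k`; as `H_k` has dimension at most one, so does `W_k`, contradicting `dim M ≥ 2`.
-/

theorem isClosed_valSub {H : Type*} [TopologicalSpace H] [SequentialSpace H] {ord : H → ℕ∞}
    (hordusc : ∀ (u : ℕ → H) (h : H), Tendsto u atTop (𝓝 h) →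
      limsup (fun j => ord (u j)) atTop ≤ ord h)
    {V : Set H} (hV : IsClosed V) (k : ℕ) : IsClosed (valSub ord V k) :=
  IsSeqClosed.isClosed fun u h hu hlim =>
    ⟨hV.mem_of_tendsto hlim (Eventually.of_forall fun j => (hu j).1),
      (le_limsup_of_frequently_le' (Frequently.of_forall fun j => (hu j).2)).trans
        (hordusc u h hlim)⟩

theorem image_smul_subset_valSub_succ {R H : Type*} [SMul R H] {ordR : R → ℕ∞} {ord : H → ℕ∞}
    (hordsmul : ∀ (r : R) (h : H), ordR r + ord h ≤ ord (r • h))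
    {V : Set H} (hinv : R1Invariant ordR V) {k : ℕ} (hVeq : V = valSub ord V k)
    {r : R} (hr : 1 ≤ ordR r) : (fun h : H => r • h) '' V ⊆ valSub ord V (k + 1) := by
  rintro _ ⟨h, hV, rfl⟩
  refine ⟨hinv r hr h hV, ?_⟩
  calc ((k + 1 : ℕ) : ℕ∞) = 1 + (k : ℕ∞) := by push_cast; ring
    _ ≤ ordR r + ord h := add_le_add hr (hVeq ▸ hV : h ∈ valSub ord V k).2
    _ ≤ ord (r • h) := hordsmul r h

theorem one_le_ordR_X {ordR : Polynomial ℂ → ℕ∞}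
    (hordRX : ∀ p : Polynomial ℂ, p ≠ 0 → ordR p = (p.rootMultiplicity 0 : ℕ∞)) :
    1 ≤ ordR Polynomial.X := by
  have hmult : (Polynomial.X : Polynomial ℂ).rootMultiplicity 0 = 1 := by
    simpa using Polynomial.rootMultiplicity_X_sub_C_self (x := (0 : ℂ))
  rw [hordRX _ Polynomial.X_ne_zero, hmult, Nat.cast_one]

section InnerProductSpace

variable {H : Type*} [NormedAddCommGroup H] [InnerProductSpace ℂ H]

theorem IsOrthProjOnto.inner_eq_inner_apply {S : Set H} {P : H → H} (hP : IsOrthProjOnto S P)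
    {g : H} (hg : g ∈ S) (h : H) : ⟪g, h⟫_ℂ = ⟪g, P h⟫_ℂ := by
  rw [← sub_eq_zero, ← inner_sub_right]
  exact (hP h).2 g hg

theorem IsOrthProjOnto.apply_eq_zero {S : Set H} {P : H → H} (hP : IsOrthProjOnto S P) {h : H}
    (hh : ∀ g ∈ S, ⟪g, h⟫_ℂ = 0) : P h = 0 := by
  have hPh := (hP h).1
  rw [← inner_self_eq_zero (𝕜 := ℂ), ← hP.inner_eq_inner_apply hPh, hh _ hPh]

theorem ord_eq_of_mem_valHom {ord : H → ℕ∞} {V : Set H} {k : ℕ} {w : H}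
    (hw : w ∈ valHom ord V k) (hw0 : w ≠ 0) : ord w = k := by
  refine le_antisymm ?_ hw.1.2
  by_contra! hlt
  have hsucc : ((k + 1 : ℕ) : ℕ∞) ≤ ord w := by
    push_cast
    exact Order.add_one_le_of_lt hlt
  exact hw0 (inner_self_eq_zero.mp (hw.2 w ⟨hw.1.1, hsucc⟩))

theorem mem_valHom_of_valSub_eq {ord : H → ℕ∞} {V : Set H} {k : ℕ}
    (hVeq : V = valSub ord V k) {w : H} (hw : w ∈ V)
    (hperp : ∀ g ∈ valSub ord V (k + 1), ⟪g, w⟫_ℂ = 0) : w ∈ valHom ord V k :=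
  ⟨hVeq ▸ hw, hperp⟩

theorem exists_smul_add_smul_eq_zero_of_mem_valHom {ord : H → ℕ∞} {P : ℕ → H → H}
    (hP : ∀ m : ℕ, IsOrthProjOnto (valHom ord (Set.univ : Set H) m) (P m))
    (hmin : MinValProp ord P)
    (hsingle : ∀ m : ℕ, ∀ x ∈ valHom ord (Set.univ : Set H) m,
      ∀ y ∈ valHom ord (Set.univ : Set H) m, ∃ a b : ℂ, (a ≠ 0 ∨ b ≠ 0) ∧ a • x + b • y = 0)
    {V : Submodule ℂ H} {k : ℕ} (hVeq : (V : Set H) = valSub ord V k) {x y : H}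
    (hx : x ∈ valHom ord V k) (hy : y ∈ valHom ord V k) :
    ∃ a b : ℂ, (a ≠ 0 ∨ b ≠ 0) ∧ a • x + b • y = 0 := by
  obtain ⟨a, b, hab, hPab⟩ := hsingle k (P k x) (hP k x).1 (P k y) (hP k y).1
  refine ⟨a, b, hab, ?_⟩
  by_contra hz
  have hinner : ∀ g, ⟪g, a • x + b • y⟫_ℂ = a * ⟪g, x⟫_ℂ + b * ⟪g, y⟫_ℂ := fun g => by
    rw [inner_add_right, inner_smul_right, inner_smul_right]
  have hzW : a • x + b • y ∈ valHom ord V k :=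
    mem_valHom_of_valSub_eq hVeq
      (V.add_mem (V.smul_mem a hx.1.1) (V.smul_mem b hy.1.1))
      fun g hg => by rw [hinner, hx.2 g hg, hy.2 g hg, mul_zero, mul_zero, add_zero]
  have hPz : P k (a • x + b • y) = 0 := (hP k).apply_eq_zero fun g hg => by
    rw [hinner, (hP k).inner_eq_inner_apply hg x, (hP k).inner_eq_inner_apply hg y,
      ← inner_smul_right, ← inner_smul_right, ← inner_add_right, hPab, inner_zero_right]
  obtain ⟨m, hPm, -, hord⟩ := hmin _ hz
  obtain rfl : m = k := by exact_mod_cast hord.symm.trans (ord_eq_of_mem_valHom hzW hz)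
  exact hPm hPz

end InnerProductSpace

theorem closure_X_smul_ssubset_general
    {H : Type*}
    [NormedAddCommGroup H] [InnerProductSpace ℂ H]
    [Module (Polynomial ℂ) H]
    (ordR : Polynomial ℂ → ℕ∞) (ord : H → ℕ∞)
    (hordRX : ∀ p : Polynomial ℂ, p ≠ 0 → ordR p = (p.rootMultiplicity 0 : ℕ∞))
    (hordsmul : ∀ (r : Polynomial ℂ) (h : H), ordR r + ord h ≤ ord (r • h))
    (hordusc : ∀ (u : ℕ → H) (h : H), Filter.Tendsto u Filter.atTop (nhds h) →
      Filter.limsup (fun j => ord (u j)) Filter.atTop ≤ ord h)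
    (P : ℕ → H → H)
    (hP : ∀ m : ℕ, IsOrthProjOnto (valHom ord (Set.univ : Set H) m) (P m))
    (hmin : MinValProp ord P)
    (hsingle : ∀ m : ℕ, ∀ x ∈ valHom ord (Set.univ : Set H) m,
      ∀ y ∈ valHom ord (Set.univ : Set H) m,
        ∃ a b : ℂ, (a ≠ 0 ∨ b ≠ 0) ∧ a • x + b • y = 0)
    (V : Submodule ℂ H) (hVc : IsClosed (V : Set H))
    (hinv : R1Invariant ordR (V : Set H))
    (k : ℕ)
    (hVeq : (V : Set H) = valSub ord (V : Set H) k)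
    (x y : H)
    (hxV : x ∈ V)
    (hxM : ∀ g ∈ closure ((fun h : H => (Polynomial.X : Polynomial ℂ) • h) '' (V : Set H)),
      (inner ℂ g x : ℂ) = 0)
    (hyV : y ∈ V)
    (hyM : ∀ g ∈ closure ((fun h : H => (Polynomial.X : Polynomial ℂ) • h) '' (V : Set H)),
      (inner ℂ g y : ℂ) = 0)
    (hxy : ∀ a b : ℂ, a • x + b • y = 0 → a = 0 ∧ b = 0) :
    closure ((fun h : H => (Polynomial.X : Polynomial ℂ) • h) '' (V : Set H))
      ⊂ valSub ord (V : Set H) (k + 1) := by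
  have hcl : closure ((fun h : H => (Polynomial.X : Polynomial ℂ) • h) '' (V : Set H))
      ⊆ valSub ord (V : Set H) (k + 1) :=
    closure_minimal (image_smul_subset_valSub_succ hordsmul hinv hVeq (one_le_ordR_X hordRX))
      (isClosed_valSub hordusc hVc (k + 1))
  refine hcl.ssubset_of_ne fun heq => ?_
  have hxW := mem_valHom_of_valSub_eq hVeq hxV (heq ▸ hxM)
  have hyW := mem_valHom_of_valSub_eq hVeq hyV (heq ▸ hyM)
  obtain ⟨a, b, hab, hdep⟩ :=
    exists_smul_add_smul_eq_zero_of_mem_valHom hP hmin hsingle hVeq hxW hyW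
  obtain ⟨rfl, rfl⟩ := hxy a b hdep
  simp at hab

/-- Suppose `R = ℂ[X]` with `ord_R p` the multiplicity of `0` as a root of `p`, `ℍ`
satisfies the minimum value property, and `ℍ` is singly generated (`dim_ℂ H_m ≤ 1` for
all `m`).  If `V` is a nonzero closed `R₁` invariant subspace, `k` the least index with
`W_k ≠ {0}`, `V = V_k`, and the orthogonal complement `M` of the closure of `X • V` in
`V` has dimension `≥ 2`, then the closure of `X • V` is a proper subspace of `V_{k+1}`. -/
theorem closure_X_smul_ssubset
    {H : Type*}
    [NormedAddCommGroup H] [InnerProductSpace ℂ H] [CompleteSpace H]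
    [Module (Polynomial ℂ) H] [SMulCommClass ℂ (Polynomial ℂ) H]
    [IsScalarTower ℂ (Polynomial ℂ) H]
    (ordR : Polynomial ℂ → ℕ∞) (ord : H → ℕ∞)
    (hordRX : ∀ p : Polynomial ℂ, p ≠ 0 → ordR p = (p.rootMultiplicity 0 : ℕ∞))
    (hordRunit : ∀ r : Polynomial ℂ, IsUnit r → ordR r = 0)
    (hordRtop : ∀ r : Polynomial ℂ, ordR r = ⊤ ↔ r = 0)
    (hordRmul : ∀ r s : Polynomial ℂ, ordR r + ordR s ≤ ordR (r * s))
    (hordRsmul : ∀ (c : ℂ) (r : Polynomial ℂ), c ≠ 0 → ordR (c • r) = ordR r)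
    (hordRadd : ∀ r s : Polynomial ℂ, min (ordR r) (ordR s) ≤ ordR (r + s))
    (hordtop : ∀ h : H, ord h = ⊤ ↔ h = 0)
    (hordsmul : ∀ (r : Polynomial ℂ) (h : H), ordR r + ord h ≤ ord (r • h))
    (hordc : ∀ (c : ℂ) (h : H), c ≠ 0 → ord (c • h) = ord h)
    (hordadd : ∀ h₁ h₂ : H, min (ord h₁) (ord h₂) ≤ ord (h₁ + h₂))
    (hordusc : ∀ (u : ℕ → H) (h : H), Filter.Tendsto u Filter.atTop (nhds h) →
      Filter.limsup (fun j => ord (u j)) Filter.atTop ≤ ord h)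
    (hsmulcont : ∀ r : Polynomial ℂ, Continuous fun h : H => r • h)
    (P : ℕ → H → H)
    (hP : ∀ m : ℕ, IsOrthProjOnto (valHom ord (Set.univ : Set H) m) (P m))
    (hmin : MinValProp ord P)
    (hsingle : ∀ m : ℕ, ∀ x ∈ valHom ord (Set.univ : Set H) m,
      ∀ y ∈ valHom ord (Set.univ : Set H) m,
        ∃ a b : ℂ, (a ≠ 0 ∨ b ≠ 0) ∧ a • x + b • y = 0)
    (V : Submodule ℂ H) (hVc : IsClosed (V : Set H)) (hVne : V ≠ ⊥)
    (hinv : R1Invariant ordR (V : Set H))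
    (k : ℕ)
    (hk : ∃ x ∈ valHom ord (V : Set H) k, x ≠ 0)
    (hkleast : ∀ j < k, ∀ x ∈ valHom ord (V : Set H) j, x = 0)
    (hVeq : (V : Set H) = valSub ord (V : Set H) k)
    (x y : H)
    (hxV : x ∈ V)
    (hxM : ∀ g ∈ closure ((fun h : H => (Polynomial.X : Polynomial ℂ) • h) '' (V : Set H)),
      (inner ℂ g x : ℂ) = 0)
    (hyV : y ∈ V)
    (hyM : ∀ g ∈ closure ((fun h : H => (Polynomial.X : Polynomial ℂ) • h) '' (V : Set H)),
      (inner ℂ g y : ℂ) = 0)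
    (hxy : ∀ a b : ℂ, a • x + b • y = 0 → a = 0 ∧ b = 0) :
    closure ((fun h : H => (Polynomial.X : Polynomial ℂ) • h) '' (V : Set H))
      ⊂ valSub ord (V : Set H) (k + 1) :=
  closure_X_smul_ssubset_general ordR ord hordRX hordsmul hordusc P hP hmin hsingle V hVc hinv k
    hVeq x y hxV hxM hyV hyM hxy
end
end
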